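/- In ℝ², let E₁ = {(y₁,y₂) : (10y₁)² + (y₂/10)² < 1} (the ellipse diag(1/10,10)·𝔹) and E₂ = 𝔹 the open unit disc, both of area π. Then for every measurable measure-preserving map φ : E₁ → E₂ (i.e. the pushforward under φ of Lebesgue measure restricted to E₁ equals Lebesgue measure restricted to E₂), one has ⨍_{E₁} |P₁(φ(y) − y)|² dy ≤ 1.21 and ⨍_{E₁} |P₂(φ(y) − y)|² dy ≥ 16(2/3 − √3/(2π)); in particular ⨍_{E₁} |P₁(φ(y) − y)|² dy < ⨍_{E₁} |P₂(φ(y) − y)|² dy. -/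

import Mathlib

open MeasureTheory Matrix

noncomputable section

abbrev EucSp (n : ℕ) := EuclideanSpace ℝ (Fin n)

/-- Principal square root of a positive semidefinite matrix (zero otherwise). -/
noncomputable def msqrt {n : ℕ} (A : Matrix (Fin n) (Fin n) ℝ) : Matrix (Fin n) (Fin n) ℝ :=
  open scoped Classical in
  if h : A.PosSemidef then
    (h.1.eigenvectorUnitary : Matrix (Fin n) (Fin n) ℝ) *
      Matrix.diagonal ((↑) ∘ Real.sqrt ∘ h.1.eigenvalues) *
      (star (h.1.eigenvectorUnitary : Matrix (Fin n) (Fin n) ℝ))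
  else 0

/-- `A ∈ 𝒜(λ,Λ)`: symmetric and uniformly elliptic. -/
def UnifElliptic {n : ℕ} (lam Lam : ℝ) (A : Matrix (Fin n) (Fin n) ℝ) : Prop :=
  A.IsSymm ∧ ∀ ξ : Fin n → ℝ,
    lam * (ξ ⬝ᵥ ξ) ≤ ξ ⬝ᵥ A.mulVec ξ ∧ ξ ⬝ᵥ A.mulVec ξ ≤ Lam * (ξ ⬝ᵥ ξ)

/-- Membership in the orthogonal group `O(n)`. -/
def IsOrthMat {n : ℕ} (Q : Matrix (Fin n) (Fin n) ℝ) : Prop :=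
  Q * Qᵀ = 1 ∧ Qᵀ * Q = 1

/-- Matrix acting on Euclidean space. -/
noncomputable def mvE {n : ℕ} (M : Matrix (Fin n) (Fin n) ℝ) (y : EucSp n) : EucSp n :=
  (EuclideanSpace.equiv (Fin n) ℝ).symm (M.mulVec ((EuclideanSpace.equiv (Fin n) ℝ) y))

/-- The ellipsoid `x + ε A^{1/2} 𝔹`. -/
noncomputable def ellipsoid {n : ℕ} (ε : ℝ) (M : Matrix (Fin n) (Fin n) ℝ) (x : EucSp n) :
    Set (EucSp n) :=
  (fun y => x + ε • mvE (msqrt M) y) '' Metric.ball (0 : EucSp n) 1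

/-- The matrix `J_α = diag(α-1, 1, …, 1)`. -/
noncomputable def Jmat (n : ℕ) (α : ℝ) : Matrix (Fin n) (Fin n) ℝ :=
  Matrix.diagonal (fun i => if (i : ℕ) = 0 then α - 1 else 1)

/-- Reflection in the first coordinate axis. -/
noncomputable def J0 (n : ℕ) : Matrix (Fin n) (Fin n) ℝ :=
  Matrix.diagonal (fun i => if (i : ℕ) = 0 then -1 else 1)

/-- The first standard basis vector `e₁`. -/
noncomputable def e1 (n : ℕ) : EucSp n :=
  (EuclideanSpace.equiv (Fin n) ℝ).symm (fun i => if (i : ℕ) = 0 then 1 else 0)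

/-- `f₁(x,z) = C|x-z|^α + C̃|x+z|²`. -/
noncomputable def f1 {n : ℕ} (α C Ct : ℝ) (x z : EucSp n) : ℝ :=
  C * ‖x - z‖ ^ α + Ct * ‖x + z‖ ^ 2

/-- The annular step function `f₂`. -/
noncomputable def f2 {n : ℕ} (α C lam ε : ℝ) (N : ℕ) (x z : EucSp n) : ℝ :=
  if ‖x - z‖ / (Real.sqrt lam * ε) > (N : ℝ) then 0
  else C ^ (2 * (2 * N - ⌈2 * ‖x - z‖ / (Real.sqrt lam * ε)⌉₊)) * ε ^ α

/-- The ellipse `diag(1/10,10)·𝔹` in `ℝ²`. -/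
def ellipseE1 : Set (EucSp 2) :=
  {y | (10 * y 0) ^ 2 + (y 1 / 10) ^ 2 < 1}

/-- The open unit disc in `ℝ²`. -/
def discE2 : Set (EucSp 2) :=
  Metric.ball (0 : EucSp 2) 1


/-!
Every coordinate of a point of `𝔹` lies in `(-1, 1)`, while `|y₁| < 1/10` on `E₁`, so
`|P₁(φ y - y)| ≤ 1.1` pointwise. On the two caps of `E₁` where `|y₂| ≥ 5` one has
`|P₂(φ y - y)| ≥ 4`. The area-preserving map `(y₁, y₂) ↦ (10 y₁, y₂ / 10)` sends `E₁` onto `𝔹`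
and these caps onto `𝔹 ∩ {|x₂| ≥ 1/2}`; by Cavalieri the strip `𝔹 ∩ {|x₂| < a}` has area
`∫_{-a}^{a} 2√(1 - t²) dt = 2 (a √(1 - a²) + arcsin a)`, so the caps have area `2π/3 - √3/2`.
-/

open Real Set

lemma volume_setOf_sq_add_sq_lt (y : ℝ) :
    volume {x : ℝ | x ^ 2 + y ^ 2 < 1} = ENNReal.ofReal (2 * √(1 - y ^ 2)) := by
  have hchord : {x : ℝ | x ^ 2 + y ^ 2 < 1} = Ioo (-√(1 - y ^ 2)) √(1 - y ^ 2) := by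
    ext x
    rw [mem_Ioo, ← abs_lt, lt_sqrt (abs_nonneg x), sq_abs, mem_ofPred_eq]
    constructor <;> intro <;> linarith
  rw [hchord, volume_Ioo]
  ring_nf

lemma hasDerivAt_mul_sqrt_one_sub_sq_add_arcsin {x : ℝ} (hx : x ∈ Ioo (-1 : ℝ) 1) :
    HasDerivAt (fun t => t * √(1 - t ^ 2) + arcsin t) (2 * √(1 - x ^ 2)) x := by
  have hpos : 0 < 1 - x ^ 2 := by nlinarith [hx.1, hx.2]
  have hsqrt : HasDerivAt (fun t => √(1 - t ^ 2)) (-(2 * x) / (2 * √(1 - x ^ 2))) x := by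
    simpa using ((hasDerivAt_pow 2 x).const_sub 1).sqrt hpos.ne'
  refine (((hasDerivAt_id' x).mul hsqrt).add (hasDerivAt_arcsin hx.1.ne' hx.2.ne)).congr_deriv ?_
  have hs : 0 < √(1 - x ^ 2) := sqrt_pos.2 hpos
  have hs2 := sq_sqrt hpos.le
  field_simp
  nlinarith

lemma integral_two_mul_sqrt_one_sub_sq {a : ℝ} (ha : 0 ≤ a) (ha1 : a ≤ 1) :
    ∫ t in -a..a, 2 * √(1 - t ^ 2) = 2 * (a * √(1 - a ^ 2) + arcsin a) := by
  rw [intervalIntegral.integral_eq_sub_of_hasDerivAt_of_le (by linarith) (by fun_prop)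
    (fun x hx => hasDerivAt_mul_sqrt_one_sub_sq_add_arcsin
      ⟨by linarith [hx.1], by linarith [hx.2]⟩)
    ((by fun_prop : Continuous _).intervalIntegrable _ _)]
  rw [arcsin_neg, neg_sq]
  ring

lemma measurableSet_disc_inter_abs_snd_lt (a : ℝ) :
    MeasurableSet {p : ℝ × ℝ | p.1 ^ 2 + p.2 ^ 2 < 1 ∧ |p.2| < a} :=
  (measurableSet_lt (by fun_prop : Measurable fun p : ℝ × ℝ => p.1 ^ 2 + p.2 ^ 2)
    measurable_const).inter (measurableSet_lt (by fun_prop : Measurable fun p : ℝ × ℝ => |p.2|)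
    measurable_const)

lemma volume_disc_inter_abs_snd_lt {a : ℝ} (ha : 0 ≤ a) (ha1 : a ≤ 1) :
    volume {p : ℝ × ℝ | p.1 ^ 2 + p.2 ^ 2 < 1 ∧ |p.2| < a} =
      ENNReal.ofReal (2 * (a * √(1 - a ^ 2) + arcsin a)) := by
  have hslice : ∀ y : ℝ, volume ((fun x => (x, y)) ⁻¹'
      {p : ℝ × ℝ | p.1 ^ 2 + p.2 ^ 2 < 1 ∧ |p.2| < a}) =
      (Ioo (-a) a).indicator (fun y => ENNReal.ofReal (2 * √(1 - y ^ 2))) y := by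
    intro y
    by_cases hy : y ∈ Ioo (-a) a
    · rw [indicator_of_mem hy, ← volume_setOf_sq_add_sq_lt]
      simp [abs_lt.2 hy]
    · rw [indicator_of_notMem hy]
      simp [abs_lt, ← mem_Ioo, hy]
  rw [Measure.volume_eq_prod, Measure.prod_apply_symm (measurableSet_disc_inter_abs_snd_lt a)]
  simp_rw [hslice]
  rw [lintegral_indicator measurableSet_Ioo, ← ofReal_integral_eq_lintegral_ofReal
      ((by fun_prop : Continuous fun y : ℝ => 2 * √(1 - y ^ 2)).integrableOn_Icc.mono_set
        Ioo_subset_Icc_self)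
      (.of_forall fun y => by positivity),
    ← integral_Ioc_eq_integral_Ioo, ← intervalIntegral.integral_of_le (by linarith),
    integral_two_mul_sqrt_one_sub_sq ha ha1]

lemma measurePreserving_mul_div {c : ℝ} (hc : c ≠ 0) :
    MeasurePreserving (fun p : ℝ × ℝ => (c * p.1, p.2 / c)) := by
  let L : ℝ × ℝ →ₗ[ℝ] ℝ × ℝ := (c • LinearMap.id).prodMap (c⁻¹ • LinearMap.id)
  have hL : ⇑L = fun p : ℝ × ℝ => (c * p.1, p.2 / c) := by
    funext p; simp [L, div_eq_inv_mul]
  have hdet : LinearMap.det L = 1 := by simp [L, LinearMap.det_prodMap, hc]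
  refine hL ▸ ⟨L.continuous_of_finiteDimensional.measurable, ?_⟩
  rw [Measure.map_linearMap_addHaar_eq_smul_addHaar (μ := (volume : Measure (ℝ × ℝ))) (f := L)
    (by simp [hdet]), hdet]
  simp

lemma measurePreserving_euclideanSpace_mul_div {c : ℝ} (hc : c ≠ 0) :
    MeasurePreserving (fun y : EucSp 2 => (c * y 0, y 1 / c)) :=
  (measurePreserving_mul_div hc).comp <| (volume_preserving_finTwoArrow ℝ).comp
    (EuclideanSpace.volume_preserving_symm_measurableEquiv_toLp (Fin 2))

lemma ellipseE1_eq_preimage :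
    ellipseE1 = (fun y : EucSp 2 => (10 * y 0, y 1 / 10)) ⁻¹'
      {p : ℝ × ℝ | p.1 ^ 2 + p.2 ^ 2 < 1 ∧ |p.2| < 1} := by
  ext y
  simp only [ellipseE1, mem_preimage, mem_ofPred_eq, iff_self_and]
  intro hy
  rw [← sq_lt_one_iff_abs_lt_one]
  nlinarith [sq_nonneg (10 * y 0)]

lemma measurableSet_ellipseE1 : MeasurableSet ellipseE1 := by
  rw [ellipseE1_eq_preimage]
  exact (measurePreserving_euclideanSpace_mul_div (by norm_num)).measurable
    (measurableSet_disc_inter_abs_snd_lt 1)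

lemma volume_ellipseE1 : volume ellipseE1 = ENNReal.ofReal π := by
  rw [ellipseE1_eq_preimage,
    (measurePreserving_euclideanSpace_mul_div (by norm_num)).measure_preimage
      (measurableSet_disc_inter_abs_snd_lt 1).nullMeasurableSet,
    volume_disc_inter_abs_snd_lt zero_le_one le_rfl, arcsin_one]
  congr 1
  norm_num
  ring

lemma measureReal_ellipseE1 : volume.real ellipseE1 = π := by
  simp [measureReal_def, volume_ellipseE1, pi_pos.le]

lemma measureReal_ellipseE1_inter_five_le_abs :
    volume.real (ellipseE1 ∩ {y | 5 ≤ |y 1|}) = 2 * π / 3 - √3 / 2 := by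
  set strip : Set (EucSp 2) := {y | |y 1 / 10| < 1 / 2}
  have hcaps : ellipseE1 ∩ {y | 5 ≤ |y 1|} = ellipseE1 \ strip := by
    ext y
    simp only [strip, mem_inter_iff, mem_sdiff, mem_ofPred_eq, not_lt, abs_div, Nat.abs_ofNat,
      le_div_iff₀ (by norm_num : (0 : ℝ) < 10)]
    norm_num
  have hstrip : ellipseE1 ∩ strip = (fun y : EucSp 2 => (10 * y 0, y 1 / 10)) ⁻¹'
      {p : ℝ × ℝ | p.1 ^ 2 + p.2 ^ 2 < 1 ∧ |p.2| < 1 / 2} := rfl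
  have hsqrt : √(1 - (1 / 2) ^ 2 : ℝ) = √3 / 2 := by
    rw [show (1 - (1 / 2) ^ 2 : ℝ) = 3 / 2 ^ 2 by norm_num, sqrt_div' _ (by norm_num),
      sqrt_sq (by norm_num)]
  have harcsin : arcsin (1 / 2) = π / 6 := by
    rw [← sin_pi_div_six, arcsin_sin (by linarith [pi_pos]) (by linarith [pi_pos])]
  have hvol_strip : volume.real (ellipseE1 ∩ strip) = π / 3 + √3 / 2 := by
    rw [measureReal_def, hstrip,
      (measurePreserving_euclideanSpace_mul_div (by norm_num)).measure_preimage
        (measurableSet_disc_inter_abs_snd_lt _).nullMeasurableSet,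
      volume_disc_inter_abs_snd_lt (by norm_num) (by norm_num), hsqrt, harcsin,
      ENNReal.toReal_ofReal (by positivity)]
    ring
  rw [hcaps]
  linarith [measureReal_sdiff_add_inter (μ := volume) (s := ellipseE1)
    (measurableSet_lt (by fun_prop) measurable_const : MeasurableSet strip)
    (by simp [volume_ellipseE1]), measureReal_ellipseE1]

section Average

variable {α : Type*} [MeasurableSpace α] {μ : Measure α} {s t : Set α} {f : α → ℝ}

lemma setAverage_le_of_forall_le {M : ℝ} (hs : MeasurableSet s) (hμ : μ s ≠ 0) (hμ' : μ s ≠ ⊤)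
    (hf : IntegrableOn f s μ) (hM : ∀ x ∈ s, f x ≤ M) : ⨍ x in s, f x ∂μ ≤ M := by
  have hpos : 0 < μ.real s := ENNReal.toReal_pos hμ hμ'
  rw [setAverage_eq, smul_eq_mul, inv_mul_le_iff₀ hpos]
  calc ∫ x in s, f x ∂μ ≤ ∫ _ in s, M ∂μ := setIntegral_mono_on hf (integrableOn_const hμ') hs hM
    _ = μ.real s * M := by rw [setIntegral_const, smul_eq_mul]

lemma measureReal_div_mul_le_setAverage {m : ℝ} (hs : MeasurableSet s) (ht : MeasurableSet t)
    (hts : t ⊆ s) (hμ' : μ s ≠ ⊤) (hf : IntegrableOn f s μ) (hf0 : ∀ x ∈ s, 0 ≤ f x)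
    (hm : ∀ x ∈ t, m ≤ f x) : μ.real t / μ.real s * m ≤ ⨍ x in s, f x ∂μ := by
  rw [setAverage_eq, smul_eq_mul, div_mul_eq_mul_div, div_eq_inv_mul]
  refine mul_le_mul_of_nonneg_left ?_ (inv_nonneg.2 measureReal_nonneg)
  calc μ.real t * m = ∫ _ in t, m ∂μ := by rw [setIntegral_const, smul_eq_mul]
    _ ≤ ∫ x in t, f x ∂μ :=
      setIntegral_mono_on (integrableOn_const (measure_ne_top_of_subset hts hμ'))
        (hf.mono_set hts) ht hm
    _ ≤ ∫ x in s, f x ∂μ :=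
      setIntegral_mono_set hf ((ae_restrict_iff' hs).2 (.of_forall hf0)) hts.eventuallyLE

end Average

lemma abs_apply_lt_one_of_mem_discE2 {z : EucSp 2} (hz : z ∈ discE2) (i : Fin 2) : |z i| < 1 :=
  (PiLp.norm_apply_le z i).trans_lt (mem_ball_zero_iff.1 hz)

lemma abs_apply_zero_le_of_mem_ellipseE1 {y : EucSp 2} (hy : y ∈ ellipseE1) : |y 0| ≤ 1 / 10 := by
  have : (10 * y 0) ^ 2 + (y 1 / 10) ^ 2 < 1 := hy
  exact abs_le.2 ⟨by nlinarith, by nlinarith⟩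

lemma abs_apply_one_le_of_mem_ellipseE1 {y : EucSp 2} (hy : y ∈ ellipseE1) : |y 1| ≤ 10 := by
  have : (10 * y 0) ^ 2 + (y 1 / 10) ^ 2 < 1 := hy
  exact abs_le.2 ⟨by nlinarith, by nlinarith⟩

lemma sq_sub_apply_le_of_mem_discE2 {y z : EucSp 2} {i : Fin 2} {r : ℝ} (hz : z ∈ discE2)
    (hy : |y i| ≤ r) : ((z - y) i) ^ 2 ≤ (r + 1) ^ 2 := by
  have hzi := abs_apply_lt_one_of_mem_discE2 hz i
  rw [PiLp.sub_apply, ← sq_abs (z i - y i)]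
  exact pow_le_pow_left₀ (abs_nonneg _) ((abs_sub _ _).trans (by linarith)) 2

lemma sq_le_sq_sub_apply_of_mem_discE2 {y z : EucSp 2} {i : Fin 2} {r : ℝ} (hz : z ∈ discE2)
    (hr : 0 ≤ r) (hy : r + 1 ≤ |y i|) : r ^ 2 ≤ ((z - y) i) ^ 2 := by
  have hzi := abs_apply_lt_one_of_mem_discE2 hz i
  rw [PiLp.sub_apply, ← sq_abs (z i - y i)]
  have := abs_sub_abs_le_abs_sub (y i) (z i)
  rw [abs_sub_comm] at this
  exact pow_le_pow_left₀ hr (by linarith) 2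

lemma integrableOn_sq_sub_apply {φ : EucSp 2 → EucSp 2} (hφmeas : Measurable φ)
    (hφmaps : ∀ y ∈ ellipseE1, φ y ∈ discE2) {i : Fin 2} {r : ℝ} (hr : ∀ y ∈ ellipseE1, |y i| ≤ r) :
    IntegrableOn (fun y => ((φ y - y) i) ^ 2) ellipseE1 := by
  refine Measure.integrableOn_of_bounded (M := (r + 1) ^ 2) (by simp [volume_ellipseE1])
    (((EuclideanSpace.proj i).continuous.measurable.comp (hφmeas.sub measurable_id)).pow_const
      2).aestronglyMeasurable ((ae_restrict_iff' measurableSet_ellipseE1).2 (.of_forall ?_))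
  intro y hy
  rw [Real.norm_of_nonneg (sq_nonneg _)]
  exact sq_sub_apply_le_of_mem_discE2 (hφmaps y hy) (hr y hy)

lemma setAverage_sq_sub_apply_zero_le {φ : EucSp 2 → EucSp 2} (hφmeas : Measurable φ)
    (hφmaps : ∀ y ∈ ellipseE1, φ y ∈ discE2) :
    ⨍ y in ellipseE1, ((φ y - y) 0) ^ 2 ≤ 1.21 := by
  refine setAverage_le_of_forall_le measurableSet_ellipseE1
    (by simp [volume_ellipseE1, pi_pos]) (by simp [volume_ellipseE1])
    (integrableOn_sq_sub_apply hφmeas hφmaps fun _ => abs_apply_zero_le_of_mem_ellipseE1)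
    fun y hy => ?_
  convert sq_sub_apply_le_of_mem_discE2 (hφmaps y hy) (abs_apply_zero_le_of_mem_ellipseE1 hy)
    using 1
  norm_num

lemma le_setAverage_sq_sub_apply_one {φ : EucSp 2 → EucSp 2} (hφmeas : Measurable φ)
    (hφmaps : ∀ y ∈ ellipseE1, φ y ∈ discE2) :
    16 * (2 / 3 - √3 / (2 * π)) ≤ ⨍ y in ellipseE1, ((φ y - y) 1) ^ 2 := by
  have hcaps := measureReal_div_mul_le_setAverage (m := 4 ^ 2) measurableSet_ellipseE1
    (measurableSet_ellipseE1.inter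
      (measurableSet_le measurable_const (by fun_prop) : MeasurableSet {y : EucSp 2 | 5 ≤ |y 1|}))
    inter_subset_left (by simp [volume_ellipseE1])
    (integrableOn_sq_sub_apply hφmeas hφmaps fun _ => abs_apply_one_le_of_mem_ellipseE1)
    (fun _ _ => sq_nonneg _) fun y hy =>
      sq_le_sq_sub_apply_of_mem_discE2 (hφmaps y hy.1) (by norm_num)
        (le_of_eq_of_le (by norm_num) hy.2)
  rw [measureReal_ellipseE1, measureReal_ellipseE1_inter_five_le_abs] at hcaps
  convert hcaps using 1
  field_simp
  ring

theorem stmt18_general (φ : EucSp 2 → EucSp 2) (hφmeas : Measurable φ)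
    (hφmaps : ∀ y ∈ ellipseE1, φ y ∈ discE2) :
    (⨍ y in ellipseE1, ((φ y - y) 0) ^ 2) ≤ 1.21 ∧
    (⨍ y in ellipseE1, ((φ y - y) 1) ^ 2) ≥
      16 * (2 / 3 - Real.sqrt 3 / (2 * Real.pi)) ∧
    (⨍ y in ellipseE1, ((φ y - y) 0) ^ 2) <
      (⨍ y in ellipseE1, ((φ y - y) 1) ^ 2) := by
  have h₀ := setAverage_sq_sub_apply_zero_le hφmeas hφmaps
  have h₁ := le_setAverage_sq_sub_apply_one hφmeas hφmaps
  have hgap : (1.21 : ℝ) < 16 * (2 / 3 - √3 / (2 * π)) := by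
    have hsqrt3 : √3 < 2 := (sqrt_lt' two_pos).2 (by norm_num)
    have : √3 / (2 * π) < 1 / 3 := by
      rw [div_lt_iff₀ (by positivity)]
      linarith [pi_gt_three]
    linarith
  exact ⟨h₀, h₁, h₀.trans_lt (hgap.trans_le h₁)⟩

/-- the two-dimensional counterexample for large distortion
(Section 6.3.1): no measure-preserving coupling works. -/
theorem stmt18 (φ : EucSp 2 → EucSp 2) (hφmeas : Measurable φ)
    (hφmaps : ∀ y ∈ ellipseE1, φ y ∈ discE2)
    (hφpush : Measure.map φ (volume.restrict ellipseE1) = volume.restrict discE2) :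
    (⨍ y in ellipseE1, ((φ y - y) 0) ^ 2) ≤ 1.21 ∧
    (⨍ y in ellipseE1, ((φ y - y) 1) ^ 2) ≥
      16 * (2 / 3 - Real.sqrt 3 / (2 * Real.pi)) ∧
    (⨍ y in ellipseE1, ((φ y - y) 0) ^ 2) <
      (⨍ y in ellipseE1, ((φ y - y) 1) ^ 2) :=
  stmt18_general φ hφmeas hφmaps

end
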